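/- Let G be a finite simple graph whose edge set is partitioned into regions E_1, …, E_k, let V_s be a skeleton set (a set of vertices containing every boundary vertex of the partition), and let G_s be the associated skeleton graph. Let e be an edge of G with e ∈ E_j, let G′ = G − e be equipped with the region partition E_1, …, E_j ∖ {e}, …, E_k and the same skeleton set V_s, and let G′_s be the skeleton graph of G′. If every pair of vertices u, w ∈ V_s ∩ V(R_j) that is connected in the region graph R_j is also connected in R_j − e, then the number of connected components of G′_s equals the number of connected components of G_s. -/

import Mathlib

/-- The region graph `R_i`: the graph on the full vertex set `V` whose edges are the
edges of the part `E i`. -/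
def regG {V : Type*} {k : ℕ} (E : Fin k → Set (Sym2 V)) (i : Fin k) : SimpleGraph V :=
  SimpleGraph.fromEdgeSet (E i)

/-- The vertex type of the skeleton graph: skeleton vertices (elements of `Vs`)
together with one auxiliary vertex for each pair `(i, group)`, a group being a
nonempty equivalence class of `Vs ∩ V(R i)` under connectivity in `R i` (encoded by
the connected component of `R i` containing the group). -/
def SkelV {V : Type*} {k : ℕ} (E : Fin k → Set (Sym2 V)) (Vs : Set V) : Type _ :=
  {x : V ⊕ (Σ i : Fin k, (regG E i).ConnectedComponent) //
    Sum.elim (· ∈ Vs)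
      (fun p => ∃ v ∈ Vs, v ∈ (regG E p.1).support ∧
        (regG E p.1).connectedComponentMk v = p.2) x}

/-- The skeleton graph: each auxiliary vertex `(i, c)` is joined to every vertex of
its group, i.e. to every `v ∈ Vs` with `v ∈ V(R i)` lying in the component `c`
of `R i`. -/
def skelGraph {V : Type*} {k : ℕ} (E : Fin k → Set (Sym2 V)) (Vs : Set V) :
    SimpleGraph (SkelV E Vs) where
  Adj x y :=
    (∃ (v : V) (i : Fin k) (c : (regG E i).ConnectedComponent),
      x.1 = Sum.inl v ∧ y.1 = Sum.inr ⟨i, c⟩ ∧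
      v ∈ (regG E i).support ∧ (regG E i).connectedComponentMk v = c) ∨
    (∃ (v : V) (i : Fin k) (c : (regG E i).ConnectedComponent),
      y.1 = Sum.inl v ∧ x.1 = Sum.inr ⟨i, c⟩ ∧
      v ∈ (regG E i).support ∧ (regG E i).connectedComponentMk v = c)
  symm := ⟨fun x y h => h.elim Or.inr Or.inl⟩
  loopless := ⟨by
    rintro x (⟨v, i, c, h1, h2, -, -⟩ | ⟨v, i, c, h1, h2, -, -⟩) <;>
      · rw [h1] at h2; simp at h2⟩

/-!
Every auxiliary vertex of a skeleton graph is adjacent to a skeleton vertex of its group, so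
its components are determined by the skeleton vertices, and two skeleton vertices lie in the
same component exactly when they are linked by a chain of groups. Deleting `e` only shrinks
region graphs, which gives a graph homomorphism `G′_s →g G_s`, surjective on components. The
connectivity hypothesis says no group of `R_j` splits, so sending a vertex of `G_s` to the
component of `G′_s` containing a skeleton vertex of its group is well defined and inverts
the induced map on components.
-/

open SimpleGraph

section SkeletonGraph

variable {V : Type*} {k : ℕ} {E E' : Fin k → Set (Sym2 V)} {Vs : Set V}

lemma skelGraph_adj_inl_inr {v : V} (hv : v ∈ Vs) {i : Fin k} {c : (regG E i).ConnectedComponent}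
    (hp : ∃ w ∈ Vs, w ∈ (regG E i).support ∧ (regG E i).connectedComponentMk w = c)
    (hsv : v ∈ (regG E i).support) (hvc : (regG E i).connectedComponentMk v = c) :
    (skelGraph E Vs).Adj ⟨.inl v, hv⟩ ⟨.inr ⟨i, c⟩, hp⟩ :=
  Or.inl ⟨v, i, c, rfl, rfl, hsv, hvc⟩

lemma skelGraph_reachable_of_regG_reachable {i : Fin k} {v w : V} (hv : v ∈ Vs) (hw : w ∈ Vs)
    (h : (regG E i).Reachable v w) :
    (skelGraph E Vs).Reachable ⟨.inl v, hv⟩ ⟨.inl w, hw⟩ := by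
  rcases eq_or_ne v w with rfl | hvw
  · rfl
  have hsv := mem_support_of_reachable hvw h
  have hgroup : ∃ u ∈ Vs, u ∈ (regG E i).support ∧
      (regG E i).connectedComponentMk u = (regG E i).connectedComponentMk v := ⟨v, hv, hsv, rfl⟩
  exact (skelGraph_adj_inl_inr hv hgroup hsv rfl).reachable.trans
    (skelGraph_adj_inl_inr hw hgroup (mem_support_of_reachable hvw.symm h.symm)
      (ConnectedComponent.sound h.symm)).symm.reachable

namespace SkelV

noncomputable def anchor : SkelV E Vs → V
  | ⟨.inl v, _⟩ => v
  | ⟨.inr _, hp⟩ => hp.choose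

lemma anchor_mem : ∀ x : SkelV E Vs, x.anchor ∈ Vs
  | ⟨.inl _, hv⟩ => hv
  | ⟨.inr _, hp⟩ => hp.choose_spec.1

lemma reachable_anchor : ∀ x : SkelV E Vs,
    (skelGraph E Vs).Reachable ⟨.inl x.anchor, x.anchor_mem⟩ x
  | ⟨.inl _, _⟩ => .rfl
  | ⟨.inr _, hp⟩ =>
    (skelGraph_adj_inl_inr hp.choose_spec.1 hp hp.choose_spec.2.1 hp.choose_spec.2.2).reachable

def ofLE (hle : ∀ i, regG E' i ≤ regG E i) : SkelV E' Vs → SkelV E Vs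
  | ⟨.inl v, hv⟩ => ⟨.inl v, hv⟩
  | ⟨.inr p, hp⟩ =>
    ⟨.inr ⟨p.1, p.2.map (Hom.ofLE (hle p.1))⟩, by
      obtain ⟨v, hv, hsv, hvc⟩ := hp
      exact ⟨v, hv, support_mono (hle p.1) hsv, by rw [← hvc]; rfl⟩⟩

end SkelV

def skelGraphHomOfLE (hle : ∀ i, regG E' i ≤ regG E i) : skelGraph E' Vs →g skelGraph E Vs where
  toFun := SkelV.ofLE hle
  map_rel' := by
    rintro ⟨_, _⟩ ⟨_, _⟩ (⟨v, i, c, rfl, rfl, hsv, rfl⟩ | ⟨v, i, c, rfl, rfl, hsv, rfl⟩)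
    · exact Or.inl ⟨v, i, _, rfl, rfl, support_mono (hle i) hsv, rfl⟩
    · exact Or.inr ⟨v, i, _, rfl, rfl, support_mono (hle i) hsv, rfl⟩

lemma skelGraphHomOfLE_map_surjective (hle : ∀ i, regG E' i ≤ regG E i) :
    Function.Surjective (ConnectedComponent.map (skelGraphHomOfLE (Vs := Vs) hle)) := by
  refine ConnectedComponent.ind fun x =>
    ⟨(skelGraph E' Vs).connectedComponentMk ⟨.inl x.anchor, x.anchor_mem⟩, ?_⟩
  exact ConnectedComponent.sound (SkelV.reachable_anchor x)

section Retraction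

variable (hreach : ∀ i, ∀ v ∈ Vs, ∀ w ∈ Vs,
  (regG E i).Reachable v w → (regG E' i).Reachable v w)

noncomputable def skelRetract (E' : Fin k → Set (Sym2 V)) (x : SkelV E Vs) :
    (skelGraph E' Vs).ConnectedComponent :=
  (skelGraph E' Vs).connectedComponentMk ⟨.inl x.anchor, x.anchor_mem⟩

include hreach in
lemma skelRetract_inr {p : Σ i, (regG E i).ConnectedComponent}
    {hp : ∃ w ∈ Vs, w ∈ (regG E p.1).support ∧ (regG E p.1).connectedComponentMk w = p.2}
    {v : V} (hv : v ∈ Vs) (hvc : (regG E p.1).connectedComponentMk v = p.2) :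
    skelRetract E' (⟨.inr p, hp⟩ : SkelV E Vs) =
      (skelGraph E' Vs).connectedComponentMk ⟨.inl v, hv⟩ := by
  obtain ⟨hmem, -, hc⟩ := hp.choose_spec
  exact ConnectedComponent.sound <| skelGraph_reachable_of_regG_reachable (i := p.1) _ _ <|
    hreach p.1 _ hmem v hv (ConnectedComponent.eq.mp (hc.trans hvc.symm))

include hreach in
lemma skelRetract_eq_of_adj {x y : SkelV E Vs} (h : (skelGraph E Vs).Adj x y) :
    skelRetract E' x = skelRetract E' y := by
  obtain ⟨_, _⟩ := x
  obtain ⟨_, _⟩ := y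
  rcases h with ⟨v, i, c, rfl, rfl, -, hvc⟩ | ⟨v, i, c, rfl, rfl, -, hvc⟩
  · exact (skelRetract_inr hreach _ hvc).symm
  · exact skelRetract_inr hreach _ hvc

include hreach in
lemma skelRetract_eq_of_reachable {x y : SkelV E Vs} (h : (skelGraph E Vs).Reachable x y) :
    skelRetract E' x = skelRetract E' y := by
  obtain ⟨p⟩ := h
  induction p with
  | nil => rfl
  | cons ha _ ih => exact (skelRetract_eq_of_adj hreach ha).trans ih

include hreach in
lemma skelRetract_ofLE (hle : ∀ i, regG E' i ≤ regG E i) (x : SkelV E' Vs) :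
    skelRetract E' (SkelV.ofLE hle x) = (skelGraph E' Vs).connectedComponentMk x := by
  obtain ⟨_ | p, hp⟩ := x
  · rfl
  obtain ⟨v, hv, hsv, hvc⟩ := id hp
  calc skelRetract E' (SkelV.ofLE hle ⟨.inr p, hp⟩)
      = skelRetract E' (⟨.inl v, hv⟩ : SkelV E Vs) :=
        skelRetract_inr hreach hv (by rw [← hvc]; rfl)
    _ = _ := ConnectedComponent.sound (skelGraph_adj_inl_inr hv hp hsv hvc).reachable

include hreach in
theorem card_connectedComponent_skelGraph_eq_of_le (hle : ∀ i, regG E' i ≤ regG E i) :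
    Nat.card (skelGraph E' Vs).ConnectedComponent =
      Nat.card (skelGraph E Vs).ConnectedComponent := by
  have hinv : Function.LeftInverse
      (Quot.lift (skelRetract E') fun _ _ => skelRetract_eq_of_reachable hreach)
      (ConnectedComponent.map (skelGraphHomOfLE (Vs := Vs) hle)) :=
    ConnectedComponent.ind (skelRetract_ofLE hreach hle)
  exact Nat.card_eq_of_bijective _ ⟨hinv.injective, skelGraphHomOfLE_map_surjective hle⟩

end Retraction

lemma regG_diff_singleton (E : Fin k → Set (Sym2 V)) (e : Sym2 V) (i : Fin k) :
    regG (fun i => E i \ {e}) i = (regG E i).deleteEdges {e} :=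
  fromEdgeSet_sdiff _ _

end SkeletonGraph

theorem stmt11_general {V : Type*} {k : ℕ}
    (E : Fin k → Set (Sym2 V))
    (hdisj : ∀ i j, i ≠ j → Disjoint (E i) (E j))
    (Vs : Set V)
    (j : Fin k) (e : Sym2 V) (he : e ∈ E j)
    (hconn : ∀ u ∈ Vs, ∀ w ∈ Vs,
      u ∈ (regG E j).support → w ∈ (regG E j).support →
      (regG E j).Reachable u w → ((regG E j).deleteEdges {e}).Reachable u w) :
    Nat.card (skelGraph (fun i => E i \ {e}) Vs).ConnectedComponent =
      Nat.card (skelGraph E Vs).ConnectedComponent := by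
  refine card_connectedComponent_skelGraph_eq_of_le (fun i v hv w hw hr => ?_)
    fun i => fromEdgeSet_mono Set.sdiff_subset
  rw [regG_diff_singleton]
  rcases eq_or_ne v w with rfl | hvw
  · rfl
  obtain rfl | hij := eq_or_ne i j
  · exact hconn v hv w hw (mem_support_of_reachable hvw hr)
      (mem_support_of_reachable hvw.symm hr.symm) hr
  · have he' : e ∉ (regG E i).edgeSet := fun h =>
      Set.disjoint_left.mp (hdisj i j hij) (edgeSet_fromEdgeSet (E i) ▸ h).1 he
    rwa [deleteEdges_eq_self.mpr (Set.disjoint_singleton_right.mpr he')]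

/-- With `G`, a region partition `E`, a skeleton set `Vs` and the
skeleton graph as before, let `e ∈ E j` be an edge of `G` and equip
`G' = G − e` with the partition `fun i => E i \ {e}` (which removes `e` from
`E j` and leaves the other parts unchanged, by disjointness) and the same skeleton
set.  If every pair of vertices of `Vs ∩ V(R j)` that is connected in the region
graph `R j` remains connected in `R j − e`, then the skeleton graph of `G'` has
the same number of connected components as the skeleton graph of `G`. -/
theorem stmt11 {V : Type*} [Fintype V] (G : SimpleGraph V) {k : ℕ}
    (E : Fin k → Set (Sym2 V))
    (hunion : ⋃ i, E i = G.edgeSet)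
    (hdisj : ∀ i j, i ≠ j → Disjoint (E i) (E j))
    (Vs : Set V)
    (hVs : ∀ v : V,
      (∃ i j, i ≠ j ∧ (∃ e ∈ E i, v ∈ e) ∧ (∃ e' ∈ E j, v ∈ e')) → v ∈ Vs)
    (j : Fin k) (e : Sym2 V) (he : e ∈ E j)
    (hconn : ∀ u ∈ Vs, ∀ w ∈ Vs,
      u ∈ (regG E j).support → w ∈ (regG E j).support →
      (regG E j).Reachable u w → ((regG E j).deleteEdges {e}).Reachable u w) :
    Nat.card (skelGraph (fun i => E i \ {e}) Vs).ConnectedComponent =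
      Nat.card (skelGraph E Vs).ConnectedComponent :=
  stmt11_general E hdisj Vs j e he hconn
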